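/- arXiv:1401.7428 — 2 statements merged into one kernel-verified Lean document; each statement's English description precedes it below -/
import Mathlib

section
/- Let X be a real Banach space and let A : X → X* be a continuous linear monotone operator with ran A = X*. Suppose there exists δ > 0 such that ⟨A x, x⟩ ≥ δ‖x‖² for all x ∈ X. Then X is reflexive. -/
open Pointwise Set NormedSpace

variable {X : Type*} [NormedAddCommGroup X] [NormedSpace ℝ X]

/-- A set-valued operator `A : X ⇉ X*`, identified with its graph, is monotone. -/
def IsMonotoneOp (A : Set (X × StrongDual ℝ X)) : Prop :=
  ∀ p ∈ A, ∀ q ∈ A, 0 ≤ (p.2 - q.2) (p.1 - q.1)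

/-- `A` is maximally monotone: monotone and every monotonically related pair belongs to it. -/
def IsMaxMonotone (A : Set (X × StrongDual ℝ X)) : Prop :=
  IsMonotoneOp A ∧
    ∀ (x : X) (xs : StrongDual ℝ X), (∀ p ∈ A, 0 ≤ (xs - p.2) (x - p.1)) → (x, xs) ∈ A

/-- `A` is ultramaximally monotone: monotone, and maximally monotone with respect to
`X** × X*`. -/
def IsUltraMaxMonotone (A : Set (X × StrongDual ℝ X)) : Prop :=
  IsMonotoneOp A ∧
    ∀ (xss : StrongDual ℝ (StrongDual ℝ X)) (xs : StrongDual ℝ X),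
      (∀ p ∈ A, 0 ≤ (xss - inclusionInDoubleDual ℝ X p.1) (xs - p.2)) →
      ∃ x : X, xss = inclusionInDoubleDual ℝ X x ∧ (x, xs) ∈ A

/-- `A` is maximally monotone of type (NI): for every `(x**, x*)`,
`inf_{(a,a*) ∈ gra A} ⟨x* − a*, x** − â⟩ ≤ 0`. -/
def IsTypeNI (A : Set (X × StrongDual ℝ X)) : Prop :=
  IsMaxMonotone A ∧
    ∀ (xss : StrongDual ℝ (StrongDual ℝ X)) (xs : StrongDual ℝ X) (ε : ℝ), 0 < ε →
      ∃ p ∈ A, (xss - inclusionInDoubleDual ℝ X p.1) (xs - p.2) < ε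

def domOp (A : Set (X × StrongDual ℝ X)) : Set X := {x | ∃ xs, (x, xs) ∈ A}

def ranOp (A : Set (X × StrongDual ℝ X)) : Set (StrongDual ℝ X) := {xs | ∃ x, (x, xs) ∈ A}

/-- The sum `A + B`: `gra (A+B) = {(x, a* + b*) : (x,a*) ∈ gra A, (x,b*) ∈ gra B}`. -/
def sumOp (A B : Set (X × StrongDual ℝ X)) : Set (X × StrongDual ℝ X) :=
  {p | ∃ as bs, (p.1, as) ∈ A ∧ (p.1, bs) ∈ B ∧ p.2 = as + bs}

/-- The Fitzpatrick function `F_A(x, x*) = sup_{(a,a*) ∈ gra A} (⟨x,a*⟩ + ⟨a,x*⟩ − ⟨a,a*⟩)`. -/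
noncomputable def fitz (A : Set (X × StrongDual ℝ X)) : X × StrongDual ℝ X → EReal :=
  fun q => ⨆ p : A, ((p.1.2 q.1 + q.2 p.1.1 - p.1.2 p.1.1 : ℝ) : EReal)

/-- The extended Fitzpatrick function
`Φ_A(x**, x*) = sup_{(a,a*) ∈ gra A} (⟨a*,x**⟩ + ⟨a,x*⟩ − ⟨a,a*⟩)` on `X** × X*`. -/
noncomputable def phiFitz (A : Set (X × StrongDual ℝ X)) : StrongDual ℝ (StrongDual ℝ X) × StrongDual ℝ X → EReal :=
  fun q => ⨆ p : A, ((q.1 p.1.2 + q.2 p.1.1 - p.1.2 p.1.1 : ℝ) : EReal)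

/-- The Fenchel conjugate of the Fitzpatrick function,
`F_A*(x*, x**) = sup_{(y,y*)} (⟨y,x*⟩ + ⟨y*,x**⟩ − F_A(y,y*))`. -/
noncomputable def fitzConj (A : Set (X × StrongDual ℝ X)) :
    StrongDual ℝ X × StrongDual ℝ (StrongDual ℝ X) → EReal :=
  fun r => ⨆ q : X × StrongDual ℝ X, (((r.1 q.1 + r.2 q.2 : ℝ) : EReal) - fitz A q)


/-- `A` is maximally monotone of type (FPV). -/
def IsFPV (A : Set (X × StrongDual ℝ X)) : Prop :=
  IsMaxMonotone A ∧
    ∀ U : Set X, IsOpen U → Convex ℝ U → (U ∩ domOp A).Nonempty →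
      ∀ x ∈ U, ∀ xs : StrongDual ℝ X,
        (∀ p ∈ A, p.1 ∈ U → 0 ≤ (xs - p.2) (x - p.1)) → (x, xs) ∈ A

/-- `A` is rectangular: `dom A × ran A ⊆ dom F_A`. -/
def IsRectangular (A : Set (X × StrongDual ℝ X)) : Prop :=
  (domOp A) ×ˢ (ranOp A) ⊆ {q : X × StrongDual ℝ X | fitz A q < ⊤}

/-- The graph of the duality map `J x = {x* : ⟨x,x*⟩ = ‖x‖² and ‖x*‖ = ‖x‖}`. -/
def dualityMapGraph : Set (X × StrongDual ℝ X) :=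
  {p | p.2 p.1 = ‖p.1‖ ^ 2 ∧ ‖p.2‖ = ‖p.1‖}

/-- The partial inf-convolution `(F₁ □₂ F₂)(x, x*) = inf_{v*} (F₁(x, x* − v*) + F₂(x, v*))`. -/
noncomputable def infConv2 (F1 F2 : X × StrongDual ℝ X → EReal) : X × StrongDual ℝ X → EReal :=
  fun q => ⨅ v : StrongDual ℝ X, (F1 (q.1, q.2 - v) + F2 (q.1, v))

/-!
The symmetric part `⟪x, y⟫ = ⟨A x, y⟩ + ⟨A y, x⟩` of a bounded coercive operator is an inner
product on `X`, and coercivity and boundedness say that `2δ‖x‖² ≤ ⟪x, x⟫ ≤ 2‖A‖‖x‖²`, so this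
inner product induces an equivalent norm. Hence `X` is isomorphic to a Hilbert space. Hilbert
spaces are reflexive by the Riesz representation theorem, and reflexivity is preserved by
isomorphisms.
-/

theorem InnerProductSpace.surjective_inclusionInDoubleDual {H : Type*} [NormedAddCommGroup H]
    [InnerProductSpace ℝ H] [CompleteSpace H] :
    Function.Surjective (inclusionInDoubleDual ℝ H) := by
  intro Φ
  let T := toDual ℝ H
  refine ⟨T.symm (Φ.comp T.toLinearIsometry.toContinuousLinearMap), ?_⟩
  ext f
  obtain ⟨z, rfl⟩ := T.surjective f
  change inner ℝ z (T.symm _) = _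
  rw [real_inner_comm, toDual_symm_apply]
  rfl

theorem ContinuousLinearEquiv.surjective_inclusionInDoubleDual {𝕜 E F : Type*}
    [NontriviallyNormedField 𝕜] [NormedAddCommGroup E] [NormedSpace 𝕜 E]
    [NormedAddCommGroup F] [NormedSpace 𝕜 F] (e : E ≃L[𝕜] F)
    (hF : Function.Surjective (inclusionInDoubleDual 𝕜 F)) :
    Function.Surjective (inclusionInDoubleDual 𝕜 E) := by
  intro Φ
  obtain ⟨y, hy⟩ := hF (Φ.comp (ContinuousLinearMap.precomp 𝕜 (e : E →L[𝕜] F)))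
  refine ⟨e.symm y, ?_⟩
  ext f
  simpa [ContinuousLinearMap.comp_assoc] using congr($hy (f.comp (e.symm : F →L[𝕜] E)))

noncomputable section

namespace IsCoercive

variable {B : X →L[ℝ] X →L[ℝ] ℝ}

@[reducible]
def symmInnerCore (hB : IsCoercive B) : InnerProductSpace.Core ℝ X where
  inner x y := B x y + B y x
  conj_inner_symm x y := by simp [add_comm]
  re_inner_nonneg x := by
    obtain ⟨C, hC, hCB⟩ := hB
    simp only [RCLike.re_to_real]
    nlinarith [hCB x, mul_nonneg hC.le (mul_self_nonneg ‖x‖)]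
  add_left x y z := by simp only [map_add, _root_.add_apply]; ring
  smul_left x y r := by simp only [map_smul, _root_.smul_apply, smul_eq_mul, conj_trivial]; ring
  definite x hx := by
    obtain ⟨C, hC, hCB⟩ := hB
    have : C * (‖x‖ * ‖x‖) ≤ 0 := by linarith [hCB x, mul_assoc C ‖x‖ ‖x‖]
    exact norm_eq_zero.mp <| mul_self_eq_zero.mp <|
      le_antisymm (nonpos_of_mul_nonpos_right this hC) (mul_self_nonneg _)

end IsCoercive

def CoerciveRenorm (_B : X →L[ℝ] X →L[ℝ] ℝ) : Type _ := X

namespace CoerciveRenorm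

variable (B : X →L[ℝ] X →L[ℝ] ℝ) [hB : Fact (IsCoercive B)]

instance : NormedAddCommGroup (CoerciveRenorm B) := hB.out.symmInnerCore.toNormedAddCommGroup
instance : InnerProductSpace ℝ (CoerciveRenorm B) :=
  @InnerProductSpace.ofCore ℝ X _ _ _ hB.out.symmInnerCore.toCore

def ofNormed : X ≃ₗ[ℝ] CoerciveRenorm B := LinearEquiv.refl ℝ X

lemma norm_ofNormed (x : X) : ‖ofNormed B x‖ = √(2 * B x x) := by
  rw [norm_eq_sqrt_real_inner, two_mul]
  rfl

lemma norm_ofNormed_le (x : X) : ‖ofNormed B x‖ ≤ √(2 * ‖B‖) * ‖x‖ := by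
  rw [norm_ofNormed, ← Real.sqrt_mul_self (norm_nonneg x), ← Real.sqrt_mul' _ (mul_self_nonneg _)]
  have : B x x ≤ ‖B‖ * ‖x‖ * ‖x‖ := (le_abs_self _).trans (B.le_opNorm₂ x x)
  apply Real.sqrt_le_sqrt
  linarith

lemma norm_le_norm_ofNormed {C : ℝ} (hC : 0 < C) (hCB : ∀ u, C * ‖u‖ * ‖u‖ ≤ B u u) (x : X) :
    ‖x‖ ≤ √((2 * C)⁻¹) * ‖ofNormed B x‖ := by
  rw [norm_ofNormed, ← Real.sqrt_mul (by positivity), ← Real.sqrt_mul_self (norm_nonneg x)]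
  apply Real.sqrt_le_sqrt
  rw [le_inv_mul_iff₀ (by positivity)]
  linarith [hCB x]

theorem nonempty_continuousLinearEquiv : Nonempty (X ≃L[ℝ] CoerciveRenorm B) :=
  let ⟨_, hC, hCB⟩ := hB.out
  ⟨(ofNormed B).toContinuousLinearEquivOfBounds _ _ (norm_ofNormed_le B)
    fun y => norm_le_norm_ofNormed B hC hCB ((ofNormed B).symm y)⟩

instance [CompleteSpace X] : CompleteSpace (CoerciveRenorm B) :=
  let ⟨e⟩ := nonempty_continuousLinearEquiv B
  (completeSpace_congr (e := e.toEquiv) e.isUniformEmbedding).1 ‹_›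

end CoerciveRenorm

theorem IsCoercive.surjective_inclusionInDoubleDual [CompleteSpace X]
    {B : X →L[ℝ] X →L[ℝ] ℝ} (hB : IsCoercive B) :
    Function.Surjective (inclusionInDoubleDual ℝ X) := by
  have : Fact (IsCoercive B) := ⟨hB⟩
  obtain ⟨e⟩ := CoerciveRenorm.nonempty_continuousLinearEquiv B
  exact e.surjective_inclusionInDoubleDual InnerProductSpace.surjective_inclusionInDoubleDual

end

theorem stmt18_general [CompleteSpace X] (A : X →L[ℝ] StrongDual ℝ X)
    (δ : ℝ) (hδ : 0 < δ) (hcoer : ∀ x : X, δ * ‖x‖ ^ 2 ≤ A x x) :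
    Function.Surjective (inclusionInDoubleDual ℝ X) :=
  IsCoercive.surjective_inclusionInDoubleDual
    ⟨δ, hδ, fun x => by simpa only [mul_assoc, sq] using hcoer x⟩

theorem stmt18 [CompleteSpace X] (A : X →L[ℝ] StrongDual ℝ X)
    (hmono : ∀ x y : X, 0 ≤ (A x - A y) (x - y))
    (hran : Set.range (fun x : X => A x) = Set.univ)
    (δ : ℝ) (hδ : 0 < δ) (hcoer : ∀ x : X, δ * ‖x‖ ^ 2 ≤ A x x) :
    Function.Surjective (inclusionInDoubleDual ℝ X) :=
  stmt18_general A δ hδ hcoer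
end

section
/- Let X be a real Banach space and let A : X → X* be a continuous linear monotone operator such that ⟨A x, x⟩ ≥ δ‖x‖² for all x ∈ X, where δ > 0. Define A† : X → X* by (A† x)(y) = (A y)(x), set P := (A + A†)/2, and let P* : X** → X* be the Banach-space adjoint of the continuous linear operator P : X → X* (so that ⟨P* x**, x⟩ = ⟨P x, x**⟩ for all x ∈ X, x** ∈ X**). Then ⟨P* x**, x**⟩ ≥ δ‖x**‖² for every x** ∈ X**, where ⟨P* x**, x**⟩ denotes x**(P* x**). -/
open Pointwise Set NormedSpace

variable {X : Type*} [NormedAddCommGroup X] [NormedSpace ℝ X]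

/-!
The symmetric part `P = (A + A†)/2` satisfies `P x x = A x x ≥ δ‖x‖²`, so `⟪x, y⟫ := P x y` is an
inner product whose norm is equivalent to `‖·‖`. In this Hilbert renorming of `X` the Riesz
representation theorem makes `P : X → X*` onto. A symmetric onto `P` forces reflexivity: given
`x**`, pick `w` with `P w = x** ∘ P`; then `x** (P u) = P w u = P u w` for every `u`, so `x** = ŵ`.
Hence `‖x**‖ = ‖w‖` and `x** (P* x**) = P w w ≥ δ‖w‖²`.
-/

/-- A copy of `X`, to carry the inner product `⟪x, y⟫ = P x y` of a symmetric coercive form. -/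
def WithForm (X : Type*) : Type _ := X

instance : AddCommGroup (WithForm X) := inferInstanceAs (AddCommGroup X)
instance : Module ℝ (WithForm X) := inferInstanceAs (Module ℝ X)

def WithForm.equiv : WithForm X ≃ₗ[ℝ] X := LinearEquiv.refl ℝ X

lemma le_sqrt_mul_of_sq_le {a b c : ℝ} (hb : 0 ≤ b) (h : a ^ 2 ≤ c * b ^ 2) : a ≤ √c * b :=
  calc a ≤ |a| := le_abs_self a
    _ ≤ √(c * b ^ 2) := Real.abs_le_sqrt h
    _ = √c * b := by rw [Real.sqrt_mul' c (sq_nonneg b), Real.sqrt_sq hb]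

lemma ContinuousLinearMap.apply_apply_self_le (P : X →L[ℝ] StrongDual ℝ X) (x : X) :
    P x x ≤ ‖P‖ * ‖x‖ ^ 2 :=
  (Real.le_norm_self _).trans ((P.le_opNorm₂ x x).trans_eq (by ring))

noncomputable abbrev WithForm.innerCore {P : X →L[ℝ] StrongDual ℝ X}
    (hsym : ∀ x y, P x y = P y x) {δ : ℝ} (hδ : 0 < δ) (hcoer : ∀ x, δ * ‖x‖ ^ 2 ≤ P x x) :
    InnerProductSpace.Core ℝ (WithForm X) where
  inner x y := P (WithForm.equiv x) (WithForm.equiv y)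
  conj_inner_symm x y := hsym _ _
  re_inner_nonneg x := (mul_nonneg hδ.le (sq_nonneg _)).trans (hcoer _)
  add_left x y z := by rw [map_add, map_add, add_apply]
  smul_left x y r := by
    rw [map_smul, map_smul, smul_apply, smul_eq_mul, conj_trivial]
  definite x hx := by
    by_contra hne
    have hpos : 0 < δ * ‖WithForm.equiv x‖ ^ 2 := by
      have := norm_pos_iff.mpr (WithForm.equiv.map_ne_zero_iff.mpr hne)
      positivity
    exact ((hcoer _).trans_eq hx).not_gt hpos

theorem ContinuousLinearMap.surjective_of_symm_of_coercive [CompleteSpace X]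
    {P : X →L[ℝ] StrongDual ℝ X} (hsym : ∀ x y, P x y = P y x) {δ : ℝ} (hδ : 0 < δ)
    (hcoer : ∀ x, δ * ‖x‖ ^ 2 ≤ P x x) : Function.Surjective P := by
  let core := WithForm.innerCore hsym hδ hcoer
  let : NormedAddCommGroup (WithForm X) := core.toNormedAddCommGroup
  let : InnerProductSpace ℝ (WithForm X) := InnerProductSpace.ofCore core.toCore
  have norm_sq (y : WithForm X) : ‖y‖ ^ 2 = P (WithForm.equiv y) (WithForm.equiv y) :=
    (real_inner_self_eq_norm_sq y).symm
  let e : WithForm X ≃L[ℝ] X :=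
    WithForm.equiv.toContinuousLinearEquivOfBounds (√δ⁻¹) √‖P‖
      (fun y => le_sqrt_mul_of_sq_le (norm_nonneg _) <| by
        rw [norm_sq, le_inv_mul_iff₀ hδ]; exact hcoer _)
      (fun x => le_sqrt_mul_of_sq_le (norm_nonneg _) <| by
        rw [norm_sq, LinearEquiv.apply_symm_apply]; exact P.apply_apply_self_le x)
  have : CompleteSpace (WithForm X) :=
    (e.isUniformEmbedding.isUniformInducing.completeSpace_congr e.surjective).mpr ‹_›
  intro f
  refine ⟨WithForm.equiv ((InnerProductSpace.toDual ℝ (WithForm X)).symm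
    (f.comp e.toContinuousLinearMap)), ?_⟩
  ext y
  exact InnerProductSpace.toDual_symm_apply (x := WithForm.equiv.symm y)

theorem NormedSpace.surjective_inclusionInDoubleDual_of_surjective_of_symm
    {P : X →L[ℝ] StrongDual ℝ X} (hsym : ∀ x y, P x y = P y x) (hsurj : Function.Surjective P) :
    Function.Surjective (inclusionInDoubleDual ℝ X) := by
  intro xss
  obtain ⟨w, hw⟩ := hsurj (xss.comp P)
  refine ⟨w, ContinuousLinearMap.ext fun f => ?_⟩
  obtain ⟨u, rfl⟩ := hsurj f
  calc P u w = P w u := hsym u w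
    _ = xss (P u) := by rw [hw]; rfl

theorem stmt19_general [CompleteSpace X] (A : X →L[ℝ] StrongDual ℝ X)
    (δ : ℝ) (hδ : 0 < δ) (hcoer : ∀ x : X, δ * ‖x‖ ^ 2 ≤ A x x) :
    ∀ xss : StrongDual ℝ (StrongDual ℝ X),
      δ * ‖xss‖ ^ 2 ≤
        xss (xss.comp ((2 : ℝ)⁻¹ • (A + ContinuousLinearMap.flip A))) := by
  set P : X →L[ℝ] StrongDual ℝ X := (2 : ℝ)⁻¹ • (A + ContinuousLinearMap.flip A)
  have hP : ∀ x y, P x y = 2⁻¹ * (A x y + A y x) := fun _ _ => rfl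
  have hsym : ∀ x y, P x y = P y x := fun x y => by rw [hP, hP, add_comm]
  have hPcoer : ∀ x, δ * ‖x‖ ^ 2 ≤ P x x := fun x => by rw [hP]; linarith [hcoer x]
  intro xss
  obtain ⟨w, rfl⟩ := surjective_inclusionInDoubleDual_of_surjective_of_symm hsym
    (P.surjective_of_symm_of_coercive hsym hδ hPcoer) xss
  have hnorm : ‖inclusionInDoubleDual ℝ X w‖ = ‖w‖ := (inclusionInDoubleDualLi ℝ).norm_map w
  rw [hnorm]
  exact hPcoer w

theorem stmt19 [CompleteSpace X] (A : X →L[ℝ] StrongDual ℝ X)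
    (hmono : ∀ x y : X, 0 ≤ (A x - A y) (x - y))
    (δ : ℝ) (hδ : 0 < δ) (hcoer : ∀ x : X, δ * ‖x‖ ^ 2 ≤ A x x) :
    ∀ xss : StrongDual ℝ (StrongDual ℝ X),
      δ * ‖xss‖ ^ 2 ≤
        xss (xss.comp ((2 : ℝ)⁻¹ • (A + ContinuousLinearMap.flip A))) :=
  stmt19_general A δ hδ hcoer
end
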